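/- arXiv:2601.07746 — 2 statements merged into one kernel-verified Lean document; each statement's English description precedes it below -/
import Mathlib

section
/- Any 11-element subset of Z/12Z contains two distinct elements at circular distance at most 1, and more specifically: for any partition of an 11-element subset of Z/12Z into blocks of sizes 3,3,3,2 (one block per suit), there exist at least two blocks each containing a pair of elements at circular distance at most 4. -/
set_option maxRecDepth 20000 in
lemma triple_close' : ∀ a b c : ZMod 12, a ≠ b → a ≠ c → b ≠ c →
    (min (a - b).val (b - a).val ≤ 4 ∨ min (a - c).val (c - a).val ≤ 4 ∨
     min (b - c).val (c - b).val ≤ 4) := by decide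

lemma three_close' (X : Finset (ZMod 12)) (hX : X.card = 3) :
    ∃ a ∈ X, ∃ b ∈ X, a ≠ b ∧ min (a - b).val (b - a).val ≤ 4 := by
  obtain ⟨a, b, c, hab, hac, hbc, rfl⟩ := Finset.card_eq_three.mp hX
  have := triple_close' a b c hab hac hbc
  rcases this with h | h | h
  · exact ⟨a, by simp, b, by simp, hab, h⟩
  · exact ⟨a, by simp, c, by simp, hac, h⟩
  · exact ⟨b, by simp, c, by simp, hbc, h⟩

lemma succ_facts : ∀ m : ZMod 12, m + 1 ≠ m ∧ m + 2 ≠ m ∧ m + 2 ≠ m + 1 ∧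
    min ((m + 2) - (m + 1)).val ((m + 1) - (m + 2)).val ≤ 1 := by decide

theorem stmt_7 (A B C D : Finset (ZMod 12))
    (hAB : Disjoint A B) (hAC : Disjoint A C) (hAD : Disjoint A D)
    (hBC : Disjoint B C) (hBD : Disjoint B D) (hCD : Disjoint C D)
    (hA : A.card = 3) (hB : B.card = 3) (hC : C.card = 3) (hD : D.card = 2) :
    (∃ a ∈ A ∪ B ∪ C ∪ D, ∃ b ∈ A ∪ B ∪ C ∪ D, a ≠ b ∧
        min (a - b).val (b - a).val ≤ 1) ∧
    (let P : Finset (ZMod 12) → Prop := fun X =>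
        ∃ a ∈ X, ∃ b ∈ X, a ≠ b ∧ min (a - b).val (b - a).val ≤ 4
     (P A ∧ P B) ∨ (P A ∧ P C) ∨ (P A ∧ P D) ∨ (P B ∧ P C) ∨ (P B ∧ P D) ∨
       (P C ∧ P D)) := by
  constructor
  · -- the union has 11 elements, complement has 1 element {m}; m+1, m+2 are in the union
    set S := A ∪ B ∪ C ∪ D with hS
    have hAB' : (A ∪ B).card = 6 := by
      rw [Finset.card_union_of_disjoint hAB, hA, hB]
    have hABC : (A ∪ B ∪ C).card = 9 := by
      rw [Finset.card_union_of_disjoint (by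
        simp [Finset.disjoint_union_left, hAC, hBC]), hAB', hC]
    have hScard : S.card = 11 := by
      rw [hS, Finset.card_union_of_disjoint (by
        simp [Finset.disjoint_union_left, hAD, hBD, hCD]), hABC, hD]
    have hcompl : Sᶜ.card = 1 := by
      have := Finset.card_compl S
      simp only [ZMod.card] at this
      omega
    obtain ⟨m, hm⟩ := Finset.card_eq_one.mp hcompl
    obtain ⟨h1, h2, h3, h4⟩ := succ_facts m
    have hmem : ∀ x : ZMod 12, x ≠ m → x ∈ S := by
      intro x hx
      by_contra hxS
      have : x ∈ Sᶜ := Finset.mem_compl.mpr hxS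
      rw [hm, Finset.mem_singleton] at this
      exact hx this
    exact ⟨m + 2, hmem _ h2, m + 1, hmem _ h1, h3, h4⟩
  · exact Or.inl ⟨three_close' A hA, three_close' B hB⟩
end

section
/- If 11 cards have pairwise distinct values among 12 possible values and are distributed over 4 suits with some suit having at least 4 cards, then that suit contains two cards whose values are at circular distance at most 3 in Z/12Z. -/
lemma Nat.sub_le_of_div_eq_div {a b k : ℕ} (h : a / (k + 1) = b / (k + 1)) : a - b ≤ k := by
  have ha := Nat.div_add_mod a (k + 1)
  have hb := Nat.div_add_mod b (k + 1)
  have hmod : a % (k + 1) < k + 1 := Nat.mod_lt a k.succ_pos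
  rw [h] at ha
  generalize (k + 1) * (b / (k + 1)) = q at ha hb
  omega

/-- Pigeonhole on the blocks `[j(d+1), (j+1)(d+1))` of representatives. -/
lemma ZMod.exists_ne_val_sub_le {n : ℕ} [NeZero n] {d m : ℕ} (hn : n ≤ (d + 1) * m)
    {S : Finset (ZMod n)} (hS : m < S.card) :
    ∃ a ∈ S, ∃ b ∈ S, a ≠ b ∧ (a - b).val ≤ d := by
  have hblock : ∀ x ∈ S, x.val / (d + 1) ∈ Finset.range m := fun x _ =>
    Finset.mem_range.mpr (Nat.div_lt_of_lt_mul (lt_of_lt_of_le x.val_lt hn))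
  obtain ⟨a, ha, b, hb, hab, hsame⟩ :=
    Finset.exists_ne_map_eq_of_card_lt_of_maps_to (by simpa using hS) hblock
  rcases le_total b.val a.val with hle | hle
  · exact ⟨a, ha, b, hb, hab, (ZMod.val_sub hle).trans_le (Nat.sub_le_of_div_eq_div hsame)⟩
  · exact ⟨b, hb, a, ha, hab.symm,
      (ZMod.val_sub hle).trans_le (Nat.sub_le_of_div_eq_div hsame.symm)⟩

theorem stmt_13_general (h : Finset (Fin 4 × ZMod 12))
    (hinj : ∀ c1 ∈ h, ∀ c2 ∈ h, c1.2 = c2.2 → c1 = c2)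
    (s : Fin 4) (hs : 4 ≤ (h.filter (fun c => c.1 = s)).card) :
    ∃ c ∈ h, ∃ c' ∈ h, c ≠ c' ∧ c.1 = s ∧ c'.1 = s ∧
      min (c.2 - c'.2).val (c'.2 - c.2).val ≤ 3 := by
  set suit := h.filter (fun c => c.1 = s)
  have hvalues : (suit.image Prod.snd).card = suit.card :=
    Finset.card_image_of_injOn fun c hc c' hc' =>
      hinj c (Finset.mem_of_mem_filter c hc) c' (Finset.mem_of_mem_filter c' hc')
  obtain ⟨v, hv, v', hv', hne, hclose⟩ :=
    ZMod.exists_ne_val_sub_le (n := 12) (d := 3) (m := 3) le_rfl (S := suit.image Prod.snd)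
      (by omega)
  obtain ⟨c, hc, rfl⟩ := Finset.mem_image.mp hv
  obtain ⟨c', hc', rfl⟩ := Finset.mem_image.mp hv'
  rw [Finset.mem_filter] at hc hc'
  exact ⟨c, hc.1, c', hc'.1, fun hcc' => hne (congrArg Prod.snd hcc'), hc.2, hc'.2,
    (min_le_left _ _).trans hclose⟩

theorem stmt_13 (h : Finset (Fin 4 × ZMod 12)) (hcard : h.card = 11)
    (hinj : ∀ c1 ∈ h, ∀ c2 ∈ h, c1.2 = c2.2 → c1 = c2)
    (s : Fin 4) (hs : 4 ≤ (h.filter (fun c => c.1 = s)).card) :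
    ∃ c ∈ h, ∃ c' ∈ h, c ≠ c' ∧ c.1 = s ∧ c'.1 = s ∧
      min (c.2 - c'.2).val (c'.2 - c.2).val ≤ 3 :=
  stmt_13_general h hinj s hs
end
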